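/- Let Γ be a group generated by a finite symmetric set S = S⁻¹ ⊆ Γ. Then for every finite nonempty subset D ⊆ Γ, the isoperimetric inequality |∂_S D| / |D| ≥ sup_{r ∈ ℕ, r ≥ 1} (1/r)·(1 − |D|/γ_S(r)) holds; equivalently, r·γ_S(r)·|∂_S D| ≥ |D|·(γ_S(r) − |D|) for every integer r ≥ 1. -/

import Mathlib

open scoped Pointwise

variable {G : Type*} [Group G] [DecidableEq G]

/-- The ball of radius `r` in the word metric: elements of `G` expressible as
a product of at most `r` elements of `S`. -/
def wordBall (S : Finset G) : ℕ → Finset G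
  | 0 => {1}
  | r + 1 => wordBall S r ∪ S * wordBall S r

/-- The inner boundary of a finite set `D` with respect to the generating set `S`. -/
def innerBoundary (S D : Finset G) : Finset G :=
  D.filter fun x => ∃ s ∈ S, s * x ∉ D

/-!
For `g` in the ball of radius `r`, the set `D \ g • D` has at most `r * |∂D|` elements: the map
`g ↦ |D \ g • D|` is subadditive, and for a generator `s` we have `D \ s • D ⊆ ∂D` because
`s⁻¹ ∈ S`. Hence `|D ∩ g • D| ≥ |D| - r * |∂D|` on the ball. Summing over the ball and using
`∑ g, |D ∩ g • D| ≤ |D|²` (a point of `D` lies in `g • D` for at most `|D|` values of `g`) gives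
`γ(r) * (|D| - r * |∂D|) ≤ |D|²`, which is the claim after dividing by `r * γ(r) * |D|`.
-/

open Finset

lemma one_mem_wordBall (S : Finset G) : ∀ r, (1 : G) ∈ wordBall S r
  | 0 => mem_singleton_self 1
  | r + 1 => mem_union_left _ (one_mem_wordBall S r)

lemma sdiff_smul_subset_innerBoundary {S : Finset G} (D : Finset G) {s : G} (hs : s⁻¹ ∈ S) :
    D \ s • D ⊆ innerBoundary S D := by
  intro x hx
  rw [mem_sdiff, ← inv_smul_mem_iff, smul_eq_mul] at hx
  exact mem_filter.2 ⟨hx.1, s⁻¹, hs, hx.2⟩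

lemma card_sdiff_mul_smul_le (D : Finset G) (a b : G) :
    #(D \ (a * b) • D) ≤ #(D \ a • D) + #(D \ b • D) :=
  calc #(D \ (a * b) • D) ≤ #((D \ a • D) ∪ (a • D \ (a * b) • D)) := by
        refine card_le_card fun x hx => ?_
        by_cases hxa : x ∈ a • D <;> simp_all
    _ ≤ #(D \ a • D) + #(a • (D \ b • D)) := by
        rw [smul_finset_sdiff, smul_smul]; exact card_union_le _ _
    _ = #(D \ a • D) + #(D \ b • D) := by rw [card_smul_finset]

lemma card_sdiff_smul_le_of_mem_wordBall {S : Finset G} (hsymm : ∀ s ∈ S, s⁻¹ ∈ S)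
    (D : Finset G) {r : ℕ} {g : G} (hg : g ∈ wordBall S r) :
    #(D \ g • D) ≤ r * #(innerBoundary S D) := by
  induction r generalizing g with
  | zero => simp_all [wordBall]
  | succ r ih =>
    rcases mem_union.1 hg with hg | hg
    · exact (ih hg).trans (Nat.mul_le_mul_right _ r.le_succ)
    · obtain ⟨s, hs, h, hh, rfl⟩ := mem_mul.1 hg
      calc #(D \ (s * h) • D) ≤ #(D \ s • D) + #(D \ h • D) := card_sdiff_mul_smul_le D s h
        _ ≤ #(innerBoundary S D) + r * #(innerBoundary S D) :=
            add_le_add (card_le_card (sdiff_smul_subset_innerBoundary D (hsymm s hs))) (ih hh)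
        _ = (r + 1) * #(innerBoundary S D) := by ring

lemma card_filter_mem_smul_le (B D : Finset G) (x : G) : #{g ∈ B | x ∈ g • D} ≤ #D :=
  calc #{g ∈ B | x ∈ g • D} ≤ #(x • D⁻¹) := card_le_card fun g hg => by
        rw [← inv_smul_mem_iff, smul_eq_mul, mem_inv', mul_inv_rev, inv_inv]
        exact inv_smul_mem_iff.2 (mem_filter.1 hg).2
    _ = #D := by rw [card_smul_finset, card_inv]

lemma sum_card_inter_smul_le (B D : Finset G) : ∑ g ∈ B, #(D ∩ g • D) ≤ #D * #D :=
  calc ∑ g ∈ B, #(D ∩ g • D) = ∑ x ∈ D, #{g ∈ B | x ∈ g • D} := by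
        simp only [← filter_mem_eq_inter, card_filter]; exact sum_comm
    _ ≤ #D * #D := by
        simpa using sum_le_sum fun x (_ : x ∈ D) => card_filter_mem_smul_le B D x

lemma card_wordBall_mul_card_le {S : Finset G} (hsymm : ∀ s ∈ S, s⁻¹ ∈ S) (D : Finset G) (r : ℕ) :
    #(wordBall S r) * #D ≤ #D * #D + #(wordBall S r) * (r * #(innerBoundary S D)) := by
  have hinter : ∀ g ∈ wordBall S r, #D ≤ #(D ∩ g • D) + r * #(innerBoundary S D) := fun g hg => by
    have := card_sdiff_smul_le_of_mem_wordBall hsymm D hg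
    have := card_inter_add_card_sdiff D (g • D)
    omega
  calc #(wordBall S r) * #D ≤ ∑ g ∈ wordBall S r, (#(D ∩ g • D) + r * #(innerBoundary S D)) := by
        simpa [mul_comm] using sum_le_sum hinter
    _ ≤ #D * #D + #(wordBall S r) * (r * #(innerBoundary S D)) := by
        rw [sum_add_distrib, sum_const, smul_eq_mul]
        gcongr
        exact sum_card_inter_smul_le _ D

theorem stmt1_general (S : Finset G)
    (hsymm : ∀ s ∈ S, s⁻¹ ∈ S)
    (D : Finset G) (hD : D.Nonempty) :
    (⨆ r : {r : ℕ // 1 ≤ r},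
        (1 / ((r : ℕ) : ℝ)) * (1 - (D.card : ℝ) / ((wordBall S (r : ℕ)).card : ℝ)))
      ≤ ((innerBoundary S D).card : ℝ) / (D.card : ℝ) := by
  refine ciSup_le fun ⟨r, hr⟩ => ?_
  have hball : (0 : ℝ) < #(wordBall S r) := mod_cast card_pos.2 ⟨1, one_mem_wordBall S r⟩
  have hD : (0 : ℝ) < #D := mod_cast hD.card_pos
  have hr : (0 : ℝ) < r := mod_cast hr
  have key : (#(wordBall S r) * #D : ℝ) ≤ #D * #D + #(wordBall S r) * (r * #(innerBoundary S D)) :=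
    mod_cast card_wordBall_mul_card_le hsymm D r
  rw [one_div_mul_eq_div, one_sub_div hball.ne', div_div, div_le_div_iff₀ (by positivity) hD]
  nlinarith

theorem stmt1 (S : Finset G)
    (hsymm : ∀ s ∈ S, s⁻¹ ∈ S) (hgen : Subgroup.closure (S : Set G) = ⊤)
    (D : Finset G) (hD : D.Nonempty) :
    (⨆ r : {r : ℕ // 1 ≤ r},
        (1 / ((r : ℕ) : ℝ)) * (1 - (D.card : ℝ) / ((wordBall S (r : ℕ)).card : ℝ)))
      ≤ ((innerBoundary S D).card : ℝ) / (D.card : ℝ) :=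
  stmt1_general S hsymm D hD
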